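/- Let M ⊆ ℝ² be a closed set, x ∈ M and v ∈ S¹ a unit vector. Suppose there are closed sets M₁, …, M_N ⊆ ℝ² with M = ⋃_{j=1}^N M_j such that for every nonempty subset I ⊆ {1, …, N} the set M_I = ⋂_{j∈I} M_j contains x and is of type T^i at x in direction v for some i ∈ {1, 2, 3, 4, 5}. Then M is of type 𝒯^i at x in direction v for some i ∈ {1, 2, 3}. -/

import Mathlib

open Set
open scoped RealInnerProductSpace

/-- The rotation of `v ∈ ℝ²` by `+90°`. -/
noncomputable def rot90 (v : EuclideanSpace ℝ (Fin 2)) : EuclideanSpace ℝ (Fin 2) :=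
  !₂[-(v 1), v 0]

/-- For `z ∈ ℝ²` and a unit vector `v`, the unique orientation-preserving isometry `γ_{z,v}`
of `ℝ²` mapping `0` to `z` and `(1,0)` to `z + v`. -/
noncomputable def gammaMap (z v : EuclideanSpace ℝ (Fin 2)) :
    EuclideanSpace ℝ (Fin 2) → EuclideanSpace ℝ (Fin 2) :=
  fun p => z + p 0 • v + p 1 • rot90 v

/-- The cone `A_r^u = {(x,y) : 0 ≤ x < r, −xu ≤ y ≤ xu}`. -/
def coneSet (r u : ℝ) : Set (EuclideanSpace ℝ (Fin 2)) :=
  {p | 0 ≤ p 0 ∧ p 0 < r ∧ -(p 0 * u) ≤ p 1 ∧ p 1 ≤ p 0 * u}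

/-- `f` is DCR on the set `J ⊆ ℝ`: it agrees on `J` with a difference of two convex
functions defined on an open interval containing `J`. -/
def IsDCROn (f : ℝ → ℝ) (J : Set ℝ) : Prop :=
  ∃ (O : Set ℝ) (g h : ℝ → ℝ), IsOpen O ∧ Convex ℝ O ∧ J ⊆ O ∧
    ConvexOn ℝ O g ∧ ConvexOn ℝ O h ∧ ∀ x ∈ J, f x = g x - h x

/-- The graph of `f` over `[0, r)`, as a subset of `ℝ²`. -/
def graphOn (f : ℝ → ℝ) (r : ℝ) : Set (EuclideanSpace ℝ (Fin 2)) :=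
  (fun x => (!₂[x, f x] : EuclideanSpace ℝ (Fin 2))) '' Ico 0 r

/-- The hypograph `{(x,y) : x ∈ [0,r), y ≤ f x}`. -/
def hypOn (f : ℝ → ℝ) (r : ℝ) : Set (EuclideanSpace ℝ (Fin 2)) :=
  {p | p 0 ∈ Ico 0 r ∧ p 1 ≤ f (p 0)}

/-- The epigraph `{(x,y) : x ∈ [0,r), y ≥ f x}`. -/
def epiOn (f : ℝ → ℝ) (r : ℝ) : Set (EuclideanSpace ℝ (Fin 2)) :=
  {p | p 0 ∈ Ico 0 r ∧ f (p 0) ≤ p 1}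

/-- `M` is a `T¹_{r,u}`-set. -/
def IsT1Set (M : Set (EuclideanSpace ℝ (Fin 2))) (r u : ℝ) : Prop :=
  M ∩ coneSet r (2 * u) = {0}

/-- `M` is a `T²_{r,u}`-set. -/
def IsT2Set (M : Set (EuclideanSpace ℝ (Fin 2))) (r u : ℝ) : Prop :=
  coneSet r (2 * u) ⊆ M

/-- `M` is a `T³_{r,u}`-set. -/
def IsT3Set (M : Set (EuclideanSpace ℝ (Fin 2))) (r u : ℝ) : Prop :=
  ∃ U : ℝ → ℝ, IsDCROn U (Ico 0 r) ∧ HasDerivWithinAt U 0 (Ici 0) 0 ∧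
    graphOn U r ⊆ coneSet r u ∧ M ∩ coneSet r (2 * u) = hypOn U r ∩ coneSet r (2 * u)

/-- `M` is a `T⁴_{r,u}`-set. -/
def IsT4Set (M : Set (EuclideanSpace ℝ (Fin 2))) (r u : ℝ) : Prop :=
  ∃ L : ℝ → ℝ, IsDCROn L (Ico 0 r) ∧ HasDerivWithinAt L 0 (Ici 0) 0 ∧
    graphOn L r ⊆ coneSet r u ∧ M ∩ coneSet r (2 * u) = epiOn L r ∩ coneSet r (2 * u)

/-- `M` is a `T⁵_{r,u}`-set. -/
def IsT5Set (M : Set (EuclideanSpace ℝ (Fin 2))) (r u : ℝ) : Prop :=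
  ∃ U L : ℝ → ℝ, IsDCROn U (Ico 0 r) ∧ IsDCROn L (Ico 0 r) ∧
    (∀ x ∈ Ico 0 r, L x ≤ U x) ∧
    HasDerivWithinAt U 0 (Ici 0) 0 ∧ HasDerivWithinAt L 0 (Ici 0) 0 ∧
    graphOn U r ⊆ coneSet r u ∧ graphOn L r ⊆ coneSet r u ∧
    M ∩ coneSet r (2 * u) = hypOn U r ∩ epiOn L r

/-- `M` is a `𝒯³_{r,u}`-set. -/
def IsTT3Set (M : Set (EuclideanSpace ℝ (Fin 2))) (r u : ℝ) : Prop :=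
  frontier M ∩ coneSet r (2 * u) ⊆ coneSet r u ∧
  ∃ (n : ℕ) (f : ℕ → ℝ → ℝ),
    (∀ i < n, IsDCROn (f i) (Ico 0 r) ∧ HasDerivWithinAt (f i) 0 (Ici 0) 0) ∧
    (∀ i, i + 1 < n → ∀ x ∈ Ico 0 r, f i x ≤ f (i + 1) x) ∧
    frontier M ∩ coneSet r u = ⋃ i ∈ Finset.range n, graphOn (f i) r ∧
    (∀ i, i + 1 < n → (∃ x ∈ Ioo 0 r, f i x = f (i + 1) x) →
      {p : EuclideanSpace ℝ (Fin 2) |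
        p 0 ∈ Ico 0 r ∧ f i (p 0) ≤ p 1 ∧ p 1 ≤ f (i + 1) (p 0)} ⊆ M)

/-- `M` is of type `T¹` at `x` in direction `v`. -/
def OfTypeT1 (M : Set (EuclideanSpace ℝ (Fin 2))) (x v : EuclideanSpace ℝ (Fin 2)) : Prop :=
  ∃ r u : ℝ, 0 < r ∧ 0 < u ∧ IsT1Set (gammaMap x v ⁻¹' M) r u

/-- `M` is of type `T²` at `x` in direction `v`. -/
def OfTypeT2 (M : Set (EuclideanSpace ℝ (Fin 2))) (x v : EuclideanSpace ℝ (Fin 2)) : Prop :=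
  ∃ r u : ℝ, 0 < r ∧ 0 < u ∧ IsT2Set (gammaMap x v ⁻¹' M) r u

/-- `M` is of type `T³` at `x` in direction `v`. -/
def OfTypeT3 (M : Set (EuclideanSpace ℝ (Fin 2))) (x v : EuclideanSpace ℝ (Fin 2)) : Prop :=
  ∃ r u : ℝ, 0 < r ∧ 0 < u ∧ IsT3Set (gammaMap x v ⁻¹' M) r u

/-- `M` is of type `T⁴` at `x` in direction `v`. -/
def OfTypeT4 (M : Set (EuclideanSpace ℝ (Fin 2))) (x v : EuclideanSpace ℝ (Fin 2)) : Prop :=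
  ∃ r u : ℝ, 0 < r ∧ 0 < u ∧ IsT4Set (gammaMap x v ⁻¹' M) r u

/-- `M` is of type `T⁵` at `x` in direction `v`. -/
def OfTypeT5 (M : Set (EuclideanSpace ℝ (Fin 2))) (x v : EuclideanSpace ℝ (Fin 2)) : Prop :=
  ∃ r u : ℝ, 0 < r ∧ 0 < u ∧ IsT5Set (gammaMap x v ⁻¹' M) r u

/-- `M` is of type `𝒯¹` at `x` in direction `v`. -/
def OfTypeTT1 (M : Set (EuclideanSpace ℝ (Fin 2))) (x v : EuclideanSpace ℝ (Fin 2)) : Prop :=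
  ∃ r u : ℝ, 0 < r ∧ 0 < u ∧ IsT1Set (gammaMap x v ⁻¹' M) r u

/-- `M` is of type `𝒯²` at `x` in direction `v`. -/
def OfTypeTT2 (M : Set (EuclideanSpace ℝ (Fin 2))) (x v : EuclideanSpace ℝ (Fin 2)) : Prop :=
  ∃ r u : ℝ, 0 < r ∧ 0 < u ∧ IsT2Set (gammaMap x v ⁻¹' M) r u

/-- `M` is of type `𝒯³` at `x` in direction `v`. -/
def OfTypeTT3 (M : Set (EuclideanSpace ℝ (Fin 2))) (x v : EuclideanSpace ℝ (Fin 2)) : Prop :=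
  ∃ r u : ℝ, 0 < r ∧ 0 < u ∧ IsTT3Set (gammaMap x v ⁻¹' M) r u

/-- `M ⊆ ℝ²` is a DC graph. -/
def IsDCGraph (M : Set (EuclideanSpace ℝ (Fin 2))) : Prop :=
  ∃ v w : EuclideanSpace ℝ (Fin 2), ‖v‖ = 1 ∧ ‖w‖ = 1 ∧ ⟪v, w⟫ = 0 ∧
    ∃ K O : Set ℝ, IsClosed K ∧ Convex ℝ K ∧ IsOpen O ∧ Convex ℝ O ∧ K ⊆ O ∧
      ∃ g h : ℝ → ℝ, ConvexOn ℝ O g ∧ ConvexOn ℝ O h ∧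
        M = (fun t => t • w + (g t - h t) • v) '' K

/-!
In the coordinates `γ_{x,v}`, take `r` and `u` so small that every `M_I` is, inside the cone
`A_r^{2u}`, either the point `0` or a band `{a(t) ≤ y ≤ b(t)}` whose edges are rims of the cone
or *flat edges*: DCR curves tangent to the axis and lying in `A_r^{u/2}`. Since the same holds for
`M_j ∩ M_k`, the bands of `M_j` and `M_k` either overlap over all of `[0, r)` or are disjoint
over `(0, r)`. Replacing overlapping bands by their hull until none overlap leaves finitely many
disjoint bands, which the connectedness of `(0, r)` stacks one above the other. The frontier of `M` inside
`A_r^u` is then the union of the flat edges of the stack, listed from bottom to top: this is the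
`𝒯³` structure, unless `M` meets the cone in `0` alone (`𝒯¹`) or fills it (`𝒯²`).
-/

open Filter Topology

local notation "ℝ²" => EuclideanSpace ℝ (Fin 2)

lemma EuclideanSpace.vec2_eta (p : ℝ²) : !₂[p 0, p 1] = p := by
  ext i; fin_cases i <;> simp

lemma EuclideanSpace.vec2_zero : (!₂[0, 0] : ℝ²) = 0 := by
  ext i; fin_cases i <;> simp

lemma continuous_gammaMap (z v : ℝ²) : Continuous (gammaMap z v) := by
  unfold gammaMap; fun_prop

lemma gammaMap_zero (z v : ℝ²) : gammaMap z v 0 = z := by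
  simp [gammaMap]

lemma disjoint_Icc_iff {a b c d : ℝ} (hab : a ≤ b) (hcd : c ≤ d) :
    Disjoint (Icc a b) (Icc c d) ↔ b < c ∨ d < a := by
  rw [disjoint_iff_inter_eq_empty, Icc_inter_Icc, Icc_eq_empty_iff, not_le, min_lt_iff,
    lt_max_iff, lt_max_iff]
  grind

lemma zero_mem_coneSet {r : ℝ} (hr : 0 < r) (u : ℝ) : (0 : ℝ²) ∈ coneSet r u := by
  simp [coneSet, hr]

lemma coneSet_mono {r u r' u' : ℝ} (hr : r' ≤ r) (hu : u' ≤ u) : coneSet r' u' ⊆ coneSet r u :=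
  fun p ⟨h0, h1, h2, h3⟩ => ⟨h0, h1.trans_le hr, by nlinarith, by nlinarith⟩

lemma eq_zero_of_mem_coneSet {r u : ℝ} {p : ℝ²} (hp : p ∈ coneSet r u) (hp0 : p 0 = 0) :
    p = 0 := by
  obtain ⟨-, -, h₁, h₂⟩ := hp
  simp only [hp0, zero_mul, neg_zero] at h₁ h₂
  rw [← EuclideanSpace.vec2_eta p, hp0, le_antisymm h₂ h₁, EuclideanSpace.vec2_zero]

lemma inter_coneSet_of_le {S Y : Set ℝ²} {r u r' u' : ℝ} (h : S ∩ coneSet r u = Y)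
    (hr : r' ≤ r) (hu : u' ≤ u) : S ∩ coneSet r' u' = Y ∩ coneSet r' u' := by
  rw [← h, inter_assoc, inter_eq_right.2 (coneSet_mono hr hu)]

lemma mem_graphOn_iff {f : ℝ → ℝ} {r : ℝ} {p : ℝ²} :
    p ∈ graphOn f r ↔ p 0 ∈ Ico 0 r ∧ p 1 = f (p 0) := by
  constructor
  · rintro ⟨x, hx, rfl⟩
    simpa using hx
  · rintro ⟨hx, hy⟩
    exact ⟨p 0, hx, by simp only [← hy, EuclideanSpace.vec2_eta]⟩

lemma map_zero_of_graphOn_subset {f : ℝ → ℝ} {r u : ℝ} (h : graphOn f r ⊆ coneSet r u)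
    (hr : 0 < r) : f 0 = 0 := by
  have := (h ⟨0, ⟨le_rfl, hr⟩, rfl⟩).2.2
  simp only [Matrix.cons_val_zero, Matrix.cons_val_one, zero_mul, neg_zero] at this
  exact le_antisymm this.2 this.1

/-! ### DC functions tangent to the axis -/

namespace IsDCROn

variable {f g : ℝ → ℝ} {J : Set ℝ}

lemma mono {J' : Set ℝ} (hf : IsDCROn f J) (hJ : J' ⊆ J) : IsDCROn f J' := by
  obtain ⟨O, g, h, hO, hOc, hJO, hg, hh, hfgh⟩ := hf
  exact ⟨O, g, h, hO, hOc, hJ.trans hJO, hg, hh, fun x hx => hfgh x (hJ hx)⟩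

lemma continuousOn (hf : IsDCROn f J) : ContinuousOn f J := by
  obtain ⟨O, g, h, hO, -, hJO, hg, hh, hfgh⟩ := hf
  exact (((hg.continuousOn hO).sub (hh.continuousOn hO)).mono hJO).congr hfgh

lemma neg (hf : IsDCROn f J) : IsDCROn (-f) J := by
  obtain ⟨O, g, h, hO, hOc, hJO, hg, hh, hfgh⟩ := hf
  exact ⟨O, h, g, hO, hOc, hJO, hh, hg, fun x hx => by simp [hfgh x hx]⟩

/-- `max (g₁ - h₁) (g₂ - h₂) = max (g₁ + h₂) (g₂ + h₁) - (h₁ + h₂)` -/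
lemma sup (hf : IsDCROn f J) (hg : IsDCROn g J) : IsDCROn (f ⊔ g) J := by
  obtain ⟨O₁, g₁, h₁, hO₁, hOc₁, hJO₁, hg₁, hh₁, hf₁⟩ := hf
  obtain ⟨O₂, g₂, h₂, hO₂, hOc₂, hJO₂, hg₂, hh₂, hf₂⟩ := hg
  have hOc := hOc₁.inter hOc₂
  have hg₁' := hg₁.subset inter_subset_left hOc
  have hh₁' := hh₁.subset inter_subset_left hOc
  have hg₂' := hg₂.subset inter_subset_right hOc
  have hh₂' := hh₂.subset inter_subset_right hOc
  refine ⟨O₁ ∩ O₂, (g₁ + h₂) ⊔ (g₂ + h₁), h₁ + h₂, hO₁.inter hO₂, hOc,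
    subset_inter hJO₁ hJO₂, (hg₁'.add hh₂').sup (hg₂'.add hh₁'), hh₁'.add hh₂', fun x hx => ?_⟩
  simp only [Pi.sup_apply, Pi.add_apply, hf₁ x hx, hf₂ x hx]
  rw [← max_sub_sub_right]
  ring_nf

lemma inf (hf : IsDCROn f J) (hg : IsDCROn g J) : IsDCROn (f ⊓ g) J := by
  have h := (hf.neg.sup hg.neg).neg
  rwa [show -(-f ⊔ -g) = f ⊓ g by ext x; simp [max_neg_neg]] at h

end IsDCROn

lemma HasDerivWithinAt.inf_of_deriv_zero {f g : ℝ → ℝ} {s : Set ℝ} {a : ℝ}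
    (hf : HasDerivWithinAt f 0 s a) (hg : HasDerivWithinAt g 0 s a) :
    HasDerivWithinAt (f ⊓ g) 0 s a := by
  rw [hasDerivWithinAt_iff_isLittleO] at *
  simp only [smul_zero, sub_zero] at *
  refine Asymptotics.IsBigO.trans_isLittleO (Asymptotics.isBigO_of_le _ fun x => ?_)
    (hf.norm_left.add hg.norm_left)
  simp only [Pi.inf_apply, Real.norm_eq_abs]
  exact (abs_min_sub_min_le_max _ _ _ _).trans
    ((max_le_add_of_nonneg (abs_nonneg _) (abs_nonneg _)).trans (le_abs_self _))

lemma HasDerivWithinAt.sup_of_deriv_zero {f g : ℝ → ℝ} {s : Set ℝ} {a : ℝ}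
    (hf : HasDerivWithinAt f 0 s a) (hg : HasDerivWithinAt g 0 s a) :
    HasDerivWithinAt (f ⊔ g) 0 s a := by
  have h := ((neg_zero (G := ℝ) ▸ hf.neg).inf_of_deriv_zero (neg_zero (G := ℝ) ▸ hg.neg)).neg
  rwa [show -(-f ⊓ -g) = f ⊔ g by ext x; simp [min_neg_neg], neg_zero] at h

lemma eventually_abs_le_of_hasDerivWithinAt {f : ℝ → ℝ} (hf : HasDerivWithinAt f 0 (Ici 0) 0)
    (hf0 : f 0 = 0) {c : ℝ} (hc : 0 < c) : ∀ᶠ r in 𝓝[>] 0, ∀ x ∈ Ico 0 r, |f x| ≤ c * x := by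
  have hbound := Asymptotics.isLittleO_iff.1 (hasDerivWithinAt_iff_isLittleO.1 hf) hc
  obtain ⟨ε, hε, hsub⟩ := (nhdsGE_basis_Ico (0 : ℝ)).eventually_iff.1 hbound
  filter_upwards [Ioo_mem_nhdsGT hε] with r hr x hx
  simpa [hf0, abs_of_nonneg hx.1] using hsub (Ico_subset_Ico_right hr.2.le hx)

/-- The slope bound `u / 2` keeps flat edges inside `A_r^u`, away from the rims of
`A_r^{2u}`. -/
def IsFlatEdge (f : ℝ → ℝ) (r u : ℝ) : Prop :=
  IsDCROn f (Ico 0 r) ∧ HasDerivWithinAt f 0 (Ici 0) 0 ∧ ∀ x ∈ Ico 0 r, |f x| ≤ u / 2 * x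

namespace IsFlatEdge

variable {f g : ℝ → ℝ} {r u : ℝ}

lemma continuousOn (hf : IsFlatEdge f r u) : ContinuousOn f (Ico 0 r) := hf.1.continuousOn

lemma map_zero (hf : IsFlatEdge f r u) (hr : 0 < r) : f 0 = 0 := by
  simpa using hf.2.2 0 ⟨le_rfl, hr⟩

lemma abs_lt (hf : IsFlatEdge f r u) (hu : 0 < u) {x : ℝ} (hx : x ∈ Ioo 0 r) :
    |f x| < x * (2 * u) := by
  have := hf.2.2 x (Ioo_subset_Ico_self hx)
  nlinarith [hx.1]

lemma graphOn_subset_coneSet (hf : IsFlatEdge f r u) : graphOn f r ⊆ coneSet r (u / 2) := by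
  rintro _ ⟨x, hx, rfl⟩
  have := abs_le.1 (hf.2.2 x hx)
  exact ⟨by simpa using hx.1, by simpa using hx.2, by simp; linarith, by simp; linarith⟩

lemma inf (hf : IsFlatEdge f r u) (hg : IsFlatEdge g r u) : IsFlatEdge (f ⊓ g) r u :=
  ⟨hf.1.inf hg.1, hf.2.1.inf_of_deriv_zero hg.2.1, fun x hx =>
    abs_min_le_max_abs_abs.trans (max_le (hf.2.2 x hx) (hg.2.2 x hx))⟩

lemma sup (hf : IsFlatEdge f r u) (hg : IsFlatEdge g r u) : IsFlatEdge (f ⊔ g) r u :=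
  ⟨hf.1.sup hg.1, hf.2.1.sup_of_deriv_zero hg.2.1, fun x hx =>
    abs_max_le_max_abs_abs.trans (max_le (hf.2.2 x hx) (hg.2.2 x hx))⟩

end IsFlatEdge

/-! ### Bands in the cone -/

/-- The lower and upper edge of a band. -/
abbrev EdgePair := (ℝ → ℝ) × (ℝ → ℝ)

def band (β : EdgePair) (r : ℝ) : Set ℝ² :=
  {p | p 0 ∈ Ico 0 r ∧ p 1 ∈ Icc (β.1 (p 0)) (β.2 (p 0))}

@[simp]
lemma vec2_mem_band {β : EdgePair} {r x y : ℝ} :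
    !₂[x, y] ∈ band β r ↔ x ∈ Ico 0 r ∧ y ∈ Icc (β.1 x) (β.2 x) := by
  simp [band]

lemma coneSet_eq_band (r u : ℝ) :
    coneSet r (2 * u) = band (fun x => -(x * (2 * u)), fun x => x * (2 * u)) r := by
  ext p; simp [coneSet, band, and_assoc]

/-- The four choices of rim or flat edge for the two edges correspond to the types `T²`, `T³`,
`T⁴` and `T⁵`. -/
structure IsConeBand (r u : ℝ) (β : EdgePair) : Prop where
  fst : EqOn β.1 (fun x => -(x * (2 * u))) (Ico 0 r) ∨ IsFlatEdge β.1 r u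
  snd : EqOn β.2 (fun x => x * (2 * u)) (Ico 0 r) ∨ IsFlatEdge β.2 r u
  le : ∀ x ∈ Ico 0 r, β.1 x ≤ β.2 x

lemma isConeBand_rims {r u : ℝ} (hu : 0 < u) :
    IsConeBand r u (fun x => -(x * (2 * u)), fun x => x * (2 * u)) :=
  ⟨Or.inl fun _ _ => rfl, Or.inl fun _ _ => rfl, fun x hx => by nlinarith [hx.1]⟩

namespace IsConeBand

variable {r u x : ℝ} {β : EdgePair}

lemma neg_le_fst (hβ : IsConeBand r u β) (hx : x ∈ Ico 0 r) : -(x * (2 * u)) ≤ β.1 x := by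
  rcases hβ.fst with h | h
  · exact (h hx).ge
  · nlinarith [abs_le.1 (h.2.2 x hx), hx.1]

lemma snd_le (hβ : IsConeBand r u β) (hx : x ∈ Ico 0 r) : β.2 x ≤ x * (2 * u) := by
  rcases hβ.snd with h | h
  · exact (h hx).le
  · nlinarith [abs_le.1 (h.2.2 x hx), hx.1]

lemma fst_zero (hβ : IsConeBand r u β) (hr : 0 < r) : β.1 0 = 0 := by
  have h0 : (0 : ℝ) ∈ Ico 0 r := ⟨le_rfl, hr⟩
  linarith [hβ.neg_le_fst h0, hβ.le 0 h0, hβ.snd_le h0]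

lemma snd_zero (hβ : IsConeBand r u β) (hr : 0 < r) : β.2 0 = 0 := by
  have h0 : (0 : ℝ) ∈ Ico 0 r := ⟨le_rfl, hr⟩
  linarith [hβ.neg_le_fst h0, hβ.le 0 h0, hβ.snd_le h0]

lemma zero_mem_band (hβ : IsConeBand r u β) (hr : 0 < r) : (0 : ℝ²) ∈ band β r := by
  rw [← EuclideanSpace.vec2_zero, vec2_mem_band, hβ.fst_zero hr, hβ.snd_zero hr]
  exact ⟨⟨le_rfl, hr⟩, le_rfl, le_rfl⟩

lemma continuousOn_fst (hβ : IsConeBand r u β) : ContinuousOn β.1 (Ico 0 r) := by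
  rcases hβ.fst with h | h
  · exact (by fun_prop : Continuous fun x : ℝ => -(x * (2 * u))).continuousOn.congr h
  · exact h.continuousOn

lemma continuousOn_snd (hβ : IsConeBand r u β) : ContinuousOn β.2 (Ico 0 r) := by
  rcases hβ.snd with h | h
  · exact (by fun_prop : Continuous fun x : ℝ => x * (2 * u)).continuousOn.congr h
  · exact h.continuousOn

lemma isFlatEdge_fst (hβ : IsConeBand r u β) (hx : x ∈ Ico 0 r) (h : -(x * (2 * u)) < β.1 x) :
    IsFlatEdge β.1 r u :=
  hβ.fst.resolve_left fun hrim => h.ne' (hrim hx)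

lemma isFlatEdge_snd (hβ : IsConeBand r u β) (hx : x ∈ Ico 0 r) (h : β.2 x < x * (2 * u)) :
    IsFlatEdge β.2 r u :=
  hβ.snd.resolve_left fun hrim => h.ne (hrim hx)

lemma coneSet_subset_band (hβ : IsConeBand r u β) (h₁ : ¬IsFlatEdge β.1 r u)
    (h₂ : ¬IsFlatEdge β.2 r u) : coneSet r (2 * u) ⊆ band β r := fun p ⟨hp0, hpr, hlow, hup⟩ => by
  have hp : p 0 ∈ Ico 0 r := ⟨hp0, hpr⟩
  refine ⟨hp, ?_, ?_⟩
  · rw [hβ.fst.resolve_right h₁ hp]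
    exact hlow
  · rw [hβ.snd.resolve_right h₂ hp]
    exact hup

end IsConeBand

def IsPointOrBand (S : Set ℝ²) (r u : ℝ) : Prop :=
  S ∩ coneSet r (2 * u) = {0} ∨ ∃ β, IsConeBand r u β ∧ S ∩ coneSet r (2 * u) = band β r

/-! ### The five types at a common scale -/

section Normalization

variable {S : Set ℝ²} {U L : ℝ → ℝ} {r r' u u' : ℝ}

lemma hypOn_inter_coneSet (hr : r' ≤ r) (hU : ∀ x ∈ Ico 0 r', |U x| ≤ u / 2 * x) :
    hypOn U r ∩ coneSet r' (2 * u) = band (fun x => -(x * (2 * u)), U) r' := by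
  ext p
  simp only [hypOn, coneSet, band, mem_inter_iff, mem_Ico, mem_Icc]
  constructor
  · rintro ⟨⟨-, hU'⟩, h0, h1, h2, -⟩
    exact ⟨⟨h0, h1⟩, h2, hU'⟩
  · rintro ⟨⟨h0, h1⟩, h2, h3⟩
    have := abs_le.1 (hU _ ⟨h0, h1⟩)
    exact ⟨⟨⟨h0, h1.trans_le hr⟩, h3⟩, h0, h1, h2, by nlinarith⟩

lemma epiOn_inter_coneSet (hr : r' ≤ r) (hL : ∀ x ∈ Ico 0 r', |L x| ≤ u / 2 * x) :
    epiOn L r ∩ coneSet r' (2 * u) = band (L, fun x => x * (2 * u)) r' := by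
  ext p
  simp only [epiOn, coneSet, band, mem_inter_iff, mem_Ico, mem_Icc]
  constructor
  · rintro ⟨⟨-, hL'⟩, h0, h1, -, h2⟩
    exact ⟨⟨h0, h1⟩, hL', h2⟩
  · rintro ⟨⟨h0, h1⟩, h2, h3⟩
    have := abs_le.1 (hL _ ⟨h0, h1⟩)
    exact ⟨⟨⟨h0, h1.trans_le hr⟩, h2⟩, h0, h1, by nlinarith, h3⟩

lemma hypOn_inter_epiOn_inter_coneSet (hr : r' ≤ r) (hU : ∀ x ∈ Ico 0 r', |U x| ≤ u / 2 * x)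
    (hL : ∀ x ∈ Ico 0 r', |L x| ≤ u / 2 * x) :
    hypOn U r ∩ epiOn L r ∩ coneSet r' (2 * u) = band (L, U) r' := by
  ext p
  simp only [hypOn, epiOn, coneSet, band, mem_inter_iff, mem_Ico, mem_Icc]
  constructor
  · rintro ⟨⟨⟨-, hU'⟩, -, hL'⟩, h0, h1, -⟩
    exact ⟨⟨h0, h1⟩, hL', hU'⟩
  · rintro ⟨⟨h0, h1⟩, h2, h3⟩
    have := abs_le.1 (hU _ ⟨h0, h1⟩)
    have := abs_le.1 (hL _ ⟨h0, h1⟩)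
    exact ⟨⟨⟨⟨h0, h1.trans_le hr⟩, h3⟩, ⟨h0, h1.trans_le hr⟩, h2⟩, h0, h1, by nlinarith,
      by nlinarith⟩

lemma IsT1Set.isPointOrBand (h : IsT1Set S r u) (hr' : 0 < r') (hr : r' ≤ r) (hu : u' ≤ u) :
    IsPointOrBand S r' u' := by
  refine Or.inl (Subset.antisymm ?_ ?_)
  · rw [← h]
    exact inter_subset_inter_right S (coneSet_mono hr (by linarith))
  · rintro p rfl
    exact ⟨(h.ge rfl).1, zero_mem_coneSet hr' _⟩

lemma IsT2Set.isPointOrBand (h : IsT2Set S r u) (hr : r' ≤ r) (hu' : 0 < u') (hu : u' ≤ u) :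
    IsPointOrBand S r' u' :=
  Or.inr ⟨_, isConeBand_rims hu', by
    rw [inter_eq_right.2 ((coneSet_mono hr (by linarith)).trans h), coneSet_eq_band]⟩

lemma IsT3Set.eventually_isPointOrBand (h : IsT3Set S r u) (hr : 0 < r) (hu' : 0 < u')
    (hu : u' ≤ u) : ∀ᶠ r' in 𝓝[>] 0, IsPointOrBand S r' u' := by
  obtain ⟨U, hdcr, hderiv, hgraph, hS⟩ := h
  filter_upwards [eventually_abs_le_of_hasDerivWithinAt hderiv
    (map_zero_of_graphOn_subset hgraph hr) (half_pos hu'), Ioc_mem_nhdsGT hr] with r' hU hr'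
  have hflat : IsFlatEdge U r' u' := ⟨hdcr.mono (Ico_subset_Ico_right hr'.2), hderiv, hU⟩
  refine Or.inr ⟨(fun x => -(x * (2 * u')), U), ⟨Or.inl fun _ _ => rfl, Or.inr hflat,
    fun x hx => by nlinarith [abs_le.1 (hU x hx), hx.1]⟩, ?_⟩
  have hcone := coneSet_mono hr'.2 (by linarith : 2 * u' ≤ 2 * u)
  rw [inter_coneSet_of_le hS hr'.2 (by linarith), inter_assoc, inter_eq_right.2 hcone,
    hypOn_inter_coneSet hr'.2 hU]

lemma IsT4Set.eventually_isPointOrBand (h : IsT4Set S r u) (hr : 0 < r) (hu' : 0 < u')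
    (hu : u' ≤ u) : ∀ᶠ r' in 𝓝[>] 0, IsPointOrBand S r' u' := by
  obtain ⟨L, hdcr, hderiv, hgraph, hS⟩ := h
  filter_upwards [eventually_abs_le_of_hasDerivWithinAt hderiv
    (map_zero_of_graphOn_subset hgraph hr) (half_pos hu'), Ioc_mem_nhdsGT hr] with r' hL hr'
  have hflat : IsFlatEdge L r' u' := ⟨hdcr.mono (Ico_subset_Ico_right hr'.2), hderiv, hL⟩
  refine Or.inr ⟨(L, fun x => x * (2 * u')), ⟨Or.inr hflat, Or.inl fun _ _ => rfl,
    fun x hx => by nlinarith [abs_le.1 (hL x hx), hx.1]⟩, ?_⟩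
  have hcone := coneSet_mono hr'.2 (by linarith : 2 * u' ≤ 2 * u)
  rw [inter_coneSet_of_le hS hr'.2 (by linarith), inter_assoc, inter_eq_right.2 hcone,
    epiOn_inter_coneSet hr'.2 hL]

lemma IsT5Set.eventually_isPointOrBand (h : IsT5Set S r u) (hr : 0 < r) (hu' : 0 < u')
    (hu : u' ≤ u) : ∀ᶠ r' in 𝓝[>] 0, IsPointOrBand S r' u' := by
  obtain ⟨U, L, hdcrU, hdcrL, hLU, hderivU, hderivL, hgraphU, hgraphL, hS⟩ := h
  filter_upwards [eventually_abs_le_of_hasDerivWithinAt hderivU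
    (map_zero_of_graphOn_subset hgraphU hr) (half_pos hu'),
    eventually_abs_le_of_hasDerivWithinAt hderivL (map_zero_of_graphOn_subset hgraphL hr)
    (half_pos hu'), Ioc_mem_nhdsGT hr] with r' hU hL hr'
  have hsub : Ico 0 r' ⊆ Ico 0 r := Ico_subset_Ico_right hr'.2
  refine Or.inr ⟨(L, U), ⟨Or.inr ⟨hdcrL.mono hsub, hderivL, hL⟩,
    Or.inr ⟨hdcrU.mono hsub, hderivU, hU⟩, fun x hx => hLU x (hsub hx)⟩, ?_⟩
  rw [inter_coneSet_of_le hS hr'.2 (by linarith), hypOn_inter_epiOn_inter_coneSet hr'.2 hU hL]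

end Normalization

lemma eventually_isPointOrBand {S : Set ℝ²} {x v : ℝ²}
    (h : OfTypeT1 S x v ∨ OfTypeT2 S x v ∨ OfTypeT3 S x v ∨ OfTypeT4 S x v ∨ OfTypeT5 S x v) :
    ∀ᶠ u in 𝓝[>] 0, ∀ᶠ r in 𝓝[>] 0, IsPointOrBand (gammaMap x v ⁻¹' S) r u := by
  rcases h with ⟨r, u, hr, hu, h⟩ | ⟨r, u, hr, hu, h⟩ | ⟨r, u, hr, hu, h⟩ | ⟨r, u, hr, hu, h⟩ |
    ⟨r, u, hr, hu, h⟩ <;> filter_upwards [Ioc_mem_nhdsGT hu] with u' hu'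
  · filter_upwards [Ioc_mem_nhdsGT hr] with r' hr' using h.isPointOrBand hr'.1 hr'.2 hu'.2
  · filter_upwards [Ioc_mem_nhdsGT hr] with r' hr' using h.isPointOrBand hr'.2 hu'.1 hu'.2
  · exact h.eventually_isPointOrBand hr hu'.1 hu'.2
  · exact h.eventually_isPointOrBand hr hu'.1 hu'.2
  · exact h.eventually_isPointOrBand hr hu'.1 hu'.2

lemma exists_forall_of_eventually_nhdsGT {ι : Type*} [Finite ι] {P : ι → ℝ → ℝ → Prop}
    (h : ∀ i, ∀ᶠ u in 𝓝[>] 0, ∀ᶠ r in 𝓝[>] 0, P i r u) :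
    ∃ r u, 0 < r ∧ 0 < u ∧ ∀ i, P i r u := by
  obtain ⟨u, hu, hu0⟩ := ((eventually_all.2 h).and self_mem_nhdsWithin).exists
  obtain ⟨r, hr, hr0⟩ := ((eventually_all.2 hu).and self_mem_nhdsWithin).exists
  exact ⟨r, u, hr0, hu0, hr⟩

/-! ### Overlapping and separated bands -/

def Overlaps (r : ℝ) (β γ : EdgePair) : Prop :=
  ∀ x ∈ Ico 0 r, (Icc (β.1 x) (β.2 x) ∩ Icc (γ.1 x) (γ.2 x)).Nonempty

def Separated (r : ℝ) (β γ : EdgePair) : Prop :=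
  ∀ x ∈ Ioo 0 r, Disjoint (Icc (β.1 x) (β.2 x)) (Icc (γ.1 x) (γ.2 x))

lemma Overlaps.symm {r : ℝ} {β γ : EdgePair} (h : Overlaps r β γ) : Overlaps r γ β :=
  fun x hx => inter_comm (Icc (β.1 x) (β.2 x)) _ ▸ h x hx

lemma Separated.symm {r : ℝ} {β γ : EdgePair} (h : Separated r β γ) : Separated r γ β :=
  fun x hx => (h x hx).symm

lemma overlaps_or_separated {S T : Set ℝ²} {r u : ℝ} {β γ : EdgePair}
    (hS : S ∩ coneSet r (2 * u) = band β r) (hT : T ∩ coneSet r (2 * u) = band γ r)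
    (hST : IsPointOrBand (S ∩ T) r u) : Overlaps r β γ ∨ Separated r β γ := by
  have hinter : S ∩ T ∩ coneSet r (2 * u) = band β r ∩ band γ r := by
    rw [inter_inter_distrib_right, hS, hT]
  rcases hST with h | ⟨δ, hδ, h⟩
  · refine Or.inr fun x hx => disjoint_left.2 fun y hβ hγ => hx.1.ne' ?_
    have hp : !₂[x, y] ∈ S ∩ T ∩ coneSet r (2 * u) := by
      rw [hinter]
      simp_all [Ioo_subset_Ico_self hx]
    rw [h, mem_singleton_iff] at hp
    simpa using congrArg (· 0) hp
  · refine Or.inl fun x hx => ⟨δ.1 x, ?_⟩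
    have hp : !₂[x, δ.1 x] ∈ S ∩ T ∩ coneSet r (2 * u) := by
      rw [h]
      simpa [hx] using hδ.le x hx
    rw [hinter] at hp
    simp_all

lemma exists_bands_of_pieces {n : ℕ} {N : Fin n → Set ℝ²} {r u : ℝ} (hr : 0 < r)
    (h0 : (0 : ℝ²) ∈ ⋃ j, N j)
    (hN : ∀ I : Finset (Fin n), I.Nonempty → IsPointOrBand (⋂ j ∈ I, N j) r u) :
    ∃ s : Finset EdgePair, (∀ β ∈ s, IsConeBand r u β) ∧
      (s : Set EdgePair).Pairwise (fun β γ => Overlaps r β γ ∨ Separated r β γ) ∧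
      (⋃ j, N j) ∩ coneSet r (2 * u) = {0} ∪ ⋃ β ∈ s, band β r := by
  classical
  have hpiece : ∀ j, ∃ β : EdgePair, N j ∩ coneSet r (2 * u) = {0} ∨
      (IsConeBand r u β ∧ N j ∩ coneSet r (2 * u) = band β r) := fun j => by
    rcases hN {j} (Finset.singleton_nonempty j) with h | ⟨β, h⟩
    · exact ⟨default, Or.inl (by simpa using h)⟩
    · exact ⟨β, Or.inr (by simpa using h)⟩
  choose β hβ using hpiece
  set A := Finset.univ.filter fun j => IsConeBand r u (β j) ∧ N j ∩ coneSet r (2 * u) = band (β j) r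
  have mem_A {j} : j ∈ A ↔ IsConeBand r u (β j) ∧ N j ∩ coneSet r (2 * u) = band (β j) r := by
    simp [A]
  refine ⟨A.image β, ?_, ?_, ?_⟩
  · simp only [Finset.mem_image, forall_exists_index, and_imp]
    rintro _ j hj rfl
    exact (mem_A.1 hj).1
  · simp only [Finset.coe_image]
    rintro _ ⟨j, hj, rfl⟩ _ ⟨k, hk, rfl⟩ -
    refine overlaps_or_separated (mem_A.1 hj).2 (mem_A.1 hk).2 ?_
    simpa using hN {j, k} (Finset.insert_nonempty _ _)
  · rw [iUnion_inter, Finset.set_biUnion_finset_image]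
    refine Subset.antisymm (iUnion_subset fun j => ?_) (union_subset ?_ ?_)
    · rcases hβ j with h | h
      · exact h ▸ subset_union_left
      · exact h.2 ▸ subset_union_of_subset_right
          (subset_biUnion_of_mem (u := fun j => band (β j) r) (mem_A.2 h)) _
    · rintro _ rfl
      obtain ⟨j, hj⟩ := mem_iUnion.1 h0
      exact mem_iUnion.2 ⟨j, hj, zero_mem_coneSet hr _⟩
    · refine iUnion₂_subset fun j hj => ?_
      rw [← (mem_A.1 hj).2]
      exact subset_iUnion (fun j => N j ∩ coneSet r (2 * u)) j

def EdgePair.hull (β γ : EdgePair) : EdgePair := (β.1 ⊓ γ.1, β.2 ⊔ γ.2)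

section Hull

variable {r u : ℝ} {β γ δ : EdgePair}

lemma Icc_subset_Icc_hull_left (x : ℝ) :
    Icc (β.1 x) (β.2 x) ⊆ Icc ((β.hull γ).1 x) ((β.hull γ).2 x) :=
  Icc_subset_Icc (min_le_left _ _) (le_max_left _ _)

lemma Icc_subset_Icc_hull_right (x : ℝ) :
    Icc (γ.1 x) (γ.2 x) ⊆ Icc ((β.hull γ).1 x) ((β.hull γ).2 x) :=
  Icc_subset_Icc (min_le_right _ _) (le_max_right _ _)

lemma Overlaps.Icc_hull (h : Overlaps r β γ) {x : ℝ} (hx : x ∈ Ico 0 r) :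
    Icc ((β.hull γ).1 x) ((β.hull γ).2 x) = Icc (β.1 x) (β.2 x) ∪ Icc (γ.1 x) (γ.2 x) := by
  obtain ⟨y, hyβ, hyγ⟩ := h x hx
  exact (Icc_union_Icc' (hyγ.1.trans hyβ.2) (hyβ.1.trans hyγ.2)).symm

lemma Overlaps.band_hull (h : Overlaps r β γ) : band (β.hull γ) r = band β r ∪ band γ r := by
  ext p
  constructor
  · rintro ⟨hp0, hp1⟩
    rw [h.Icc_hull hp0] at hp1
    exact hp1.imp (⟨hp0, ·⟩) (⟨hp0, ·⟩)
  · rintro (⟨hp0, hp1⟩ | ⟨hp0, hp1⟩)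
    · exact ⟨hp0, Icc_subset_Icc_hull_left _ hp1⟩
    · exact ⟨hp0, Icc_subset_Icc_hull_right _ hp1⟩

lemma Overlaps.hull_left (h : Overlaps r β δ) : Overlaps r (β.hull γ) δ :=
  fun x hx => (h x hx).mono (inter_subset_inter_left _ (Icc_subset_Icc_hull_left x))

lemma Overlaps.hull_right (h : Overlaps r γ δ) : Overlaps r (β.hull γ) δ :=
  fun x hx => (h x hx).mono (inter_subset_inter_left _ (Icc_subset_Icc_hull_right x))

lemma Separated.hull (hβγ : Overlaps r β γ) (hβ : Separated r β δ) (hγ : Separated r γ δ) :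
    Separated r (β.hull γ) δ := fun x hx => by
  rw [hβγ.Icc_hull (Ioo_subset_Ico_self hx)]
  exact disjoint_union_left.2 ⟨hβ x hx, hγ x hx⟩

lemma Overlaps.hull_overlaps_or_separated (hβγ : Overlaps r β γ)
    (hβ : Overlaps r β δ ∨ Separated r β δ) (hγ : Overlaps r γ δ ∨ Separated r γ δ) :
    Overlaps r (β.hull γ) δ ∨ Separated r (β.hull γ) δ := by
  rcases hβ with hβ | hβ
  · exact Or.inl hβ.hull_left
  rcases hγ with hγ | hγ
  · exact Or.inl hγ.hull_right
  exact Or.inr (hβ.hull hβγ hγ)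

lemma IsConeBand.hull (hβ : IsConeBand r u β) (hγ : IsConeBand r u γ) :
    IsConeBand r u (β.hull γ) where
  fst := by
    rcases hβ.fst with hβ₁ | hβ₁
    · exact Or.inl fun x hx =>
        (min_eq_left ((hβ₁ hx).trans_le (hγ.neg_le_fst hx))).trans (hβ₁ hx)
    rcases hγ.fst with hγ₁ | hγ₁
    · exact Or.inl fun x hx =>
        (min_eq_right ((hγ₁ hx).trans_le (hβ.neg_le_fst hx))).trans (hγ₁ hx)
    exact Or.inr (hβ₁.inf hγ₁)
  snd := by
    rcases hβ.snd with hβ₂ | hβ₂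
    · exact Or.inl fun x hx =>
        (max_eq_left ((hγ.snd_le hx).trans_eq (hβ₂ hx).symm)).trans (hβ₂ hx)
    rcases hγ.snd with hγ₂ | hγ₂
    · exact Or.inl fun x hx =>
        (max_eq_right ((hβ.snd_le hx).trans_eq (hγ₂ hx).symm)).trans (hγ₂ hx)
    exact Or.inr (hβ₂.sup hγ₂)
  le x hx := (min_le_left _ _).trans ((hβ.le x hx).trans (le_max_left _ _))

end Hull

/-- Overlapping bands are replaced by their hull until no two overlap. -/
lemma exists_separated_bands {r u : ℝ} (s : Finset EdgePair) (hs : ∀ β ∈ s, IsConeBand r u β)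
    (hpair : (s : Set EdgePair).Pairwise fun β γ => Overlaps r β γ ∨ Separated r β γ) :
    ∃ t : Finset EdgePair, (∀ β ∈ t, IsConeBand r u β) ∧
      (t : Set EdgePair).Pairwise (Separated r) ∧ ⋃ β ∈ t, band β r = ⋃ β ∈ s, band β r := by
  classical
  induction hn : s.card using Nat.strong_induction_on generalizing s with
  | _ n ih =>
  by_cases hov : ∃ β ∈ s, ∃ γ ∈ s, β ≠ γ ∧ Overlaps r β γ
  swap
  · simp only [not_exists, not_and] at hov
    exact ⟨s, hs, fun β hβ γ hγ hne => (hpair hβ hγ hne).resolve_left (hov β hβ γ hγ hne), rfl⟩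
  obtain ⟨β, hβ, γ, hγ, hne, hβγ⟩ := hov
  set rest := (s.erase β).erase γ
  have hs_eq : s = insert β (insert γ rest) := by
    rw [Finset.insert_erase (Finset.mem_erase.2 ⟨hne.symm, hγ⟩), Finset.insert_erase hβ]
  have mem_rest {δ} : δ ∈ rest ↔ δ ≠ γ ∧ δ ≠ β ∧ δ ∈ s := by simp [rest]
  have hcard : (insert (β.hull γ) rest).card < n := by
    have := Finset.card_insert_le (β.hull γ) rest
    have := Finset.card_erase_of_mem (Finset.mem_erase.2 ⟨hne.symm, hγ⟩)
    have := Finset.card_erase_of_mem hβ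
    have := Finset.card_pos.2 ⟨β, hβ⟩
    grind
  have hgood : ∀ δ ∈ insert (β.hull γ) rest, IsConeBand r u δ := by
    simp only [Finset.mem_insert, forall_eq_or_imp, mem_rest]
    exact ⟨(hs β hβ).hull (hs γ hγ), fun δ hδ => hs δ hδ.2.2⟩
  have hpair' : (↑(insert (β.hull γ) rest) : Set EdgePair).Pairwise
      fun β γ => Overlaps r β γ ∨ Separated r β γ := by
    rw [Finset.coe_insert, pairwise_insert]
    refine ⟨hpair.mono fun δ hδ => (mem_rest.1 hδ).2.2, fun δ hδ _ => ?_⟩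
    obtain ⟨hδγ, hδβ, hδ⟩ := mem_rest.1 hδ
    have h := hβγ.hull_overlaps_or_separated (hpair hβ hδ hδβ.symm) (hpair hγ hδ hδγ.symm)
    exact ⟨h, h.imp Overlaps.symm Separated.symm⟩
  obtain ⟨t, ht, htpair, htun⟩ := ih _ hcard _ hgood hpair' rfl
  refine ⟨t, ht, htpair, ?_⟩
  rw [htun, hs_eq, Finset.set_biUnion_insert, Finset.set_biUnion_insert,
    Finset.set_biUnion_insert, hβγ.band_hull, union_assoc]

/-! ### Stacking separated bands -/

section Separated

variable {r u : ℝ} {β γ : EdgePair}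

lemma Separated.forall_lt_or_forall_lt (h : Separated r β γ) (hβ : IsConeBand r u β)
    (hγ : IsConeBand r u γ) :
    (∀ x ∈ Ioo 0 r, β.2 x < γ.1 x) ∨ ∀ x ∈ Ioo 0 r, γ.2 x < β.1 x := by
  have hlt : ∀ x ∈ Ioo 0 r, β.2 x < γ.1 x ∨ γ.2 x < β.1 x := fun x hx =>
    (disjoint_Icc_iff (hβ.le x (Ioo_subset_Ico_self hx)) (hγ.le x (Ioo_subset_Ico_self hx))).1
      (h x hx)
  by_contra! ⟨⟨x₁, hx₁, h₁⟩, ⟨x₂, hx₂, h₂⟩⟩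
  have hcont : ContinuousOn (γ.1 - β.2) (Ioo 0 r) :=
    (hγ.continuousOn_fst.sub hβ.continuousOn_snd).mono Ioo_subset_Ico_self
  obtain ⟨x, hx, hx0⟩ := isPreconnected_Ioo.intermediate_value hx₁ hx₂ hcont
    ⟨sub_nonpos.2 h₁, sub_nonneg.2 ((hlt x₂ hx₂).resolve_right h₂.not_gt).le⟩
  rw [Pi.sub_apply, sub_eq_zero] at hx0
  have := hβ.le x (Ioo_subset_Ico_self hx)
  have := hγ.le x (Ioo_subset_Ico_self hx)
  rcases hlt x hx with h | h <;> linarith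

lemma Separated.fst_ne (h : Separated r β γ) (hβ : IsConeBand r u β) (hγ : IsConeBand r u γ)
    {x : ℝ} (hx : x ∈ Ioo 0 r) : β.1 x ≠ γ.1 x := fun hfst =>
  disjoint_left.1 (h x hx) ⟨le_rfl, hβ.le x (Ioo_subset_Ico_self hx)⟩
    ⟨hfst.ge, hfst.le.trans (hγ.le x (Ioo_subset_Ico_self hx))⟩

lemma Separated.forall_lt_of_fst_lt (h : Separated r β γ) (hβ : IsConeBand r u β)
    (hγ : IsConeBand r u γ) {x₀ : ℝ} (hx₀ : x₀ ∈ Ioo 0 r) (hlt : β.1 x₀ < γ.1 x₀) :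
    ∀ x ∈ Ioo 0 r, β.2 x < γ.1 x :=
  (h.forall_lt_or_forall_lt hβ hγ).resolve_right fun h' =>
    hlt.not_ge ((hγ.le x₀ (Ioo_subset_Ico_self hx₀)).trans (h' x₀ hx₀).le)

end Separated

/-- Only `e 0, …, e (m - 1)` are bands of the stack, listed from bottom to top. -/
structure IsSortedBands (r u : ℝ) (m : ℕ) (e : ℕ → EdgePair) : Prop where
  isConeBand : ∀ c < m, IsConeBand r u (e c)
  lt : ∀ c c', c < c' → c' < m → ∀ x ∈ Ioo 0 r, (e c).2 x < (e c').1 x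

/-- The bands are sorted by the height of their lower edge at `r / 2`. -/
lemma exists_isSortedBands {r u : ℝ} (hr : 0 < r) (t : Finset EdgePair)
    (ht : ∀ β ∈ t, IsConeBand r u β) (hsep : (t : Set EdgePair).Pairwise (Separated r)) :
    ∃ m e, IsSortedBands r u m e ∧ ⋃ β ∈ t, band β r = ⋃ c ∈ Finset.range m, band (e c) r := by
  classical
  have hmid : r / 2 ∈ Ioo 0 r := ⟨half_pos hr, half_lt_self hr⟩
  let key : EdgePair → ℝ := fun β => β.1 (r / 2)
  set σ := (t.image key).orderEmbOfFin rfl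
  have hσ : ∀ c, ∃ β, ∀ hc : c < (t.image key).card, β ∈ t ∧ key β = σ ⟨c, hc⟩ := fun c => by
    by_cases hc : c < (t.image key).card
    · obtain ⟨β, hβ, hkey⟩ := Finset.mem_image.1 ((t.image key).orderEmbOfFin_mem rfl ⟨c, hc⟩)
      exact ⟨β, fun _ => ⟨hβ, hkey⟩⟩
    · exact ⟨default, fun h => absurd h hc⟩
  choose e he using hσ
  refine ⟨_, e, ⟨fun c hc => ht _ (he c hc).1, fun c c' hcc' hc' => ?_⟩, ?_⟩
  · have hc := hcc'.trans hc'
    have hlt : key (e c) < key (e c') := by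
      rw [(he c hc).2, (he c' hc').2]
      exact σ.strictMono (Fin.mk_lt_mk.2 hcc')
    exact (hsep (he c hc).1 (he c' hc').1 fun h => hlt.ne (congrArg key h)).forall_lt_of_fst_lt
      (ht _ (he c hc).1) (ht _ (he c' hc').1) hmid hlt
  · refine Subset.antisymm (iUnion₂_subset fun β hβ => ?_)
      (iUnion₂_subset fun c hc => subset_biUnion_of_mem (u := fun β => band β r)
        (he c (Finset.mem_range.1 hc)).1)
    obtain ⟨c, hc⟩ : key β ∈ range σ := by
      rw [Finset.range_orderEmbOfFin]
      exact Finset.mem_coe.2 (Finset.mem_image_of_mem key hβ)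
    obtain ⟨hct, hckey⟩ := he c c.2
    have hβc : β = e c := by
      by_contra hne
      exact (hsep hβ hct hne).fst_ne (ht β hβ) (ht _ hct) hmid (hc.symm.trans hckey.symm)
    rw [hβc]
    exact subset_biUnion_of_mem (u := fun c => band (e c) r) (Finset.mem_range.2 c.2)

namespace IsSortedBands

variable {r u : ℝ} {m : ℕ} {e : ℕ → EdgePair} {c : ℕ} {x : ℝ}

lemma snd_le_fst (h : IsSortedBands r u m e) (hr : 0 < r) (hc : c + 1 < m) (hx : x ∈ Ico 0 r) :
    (e c).2 x ≤ (e (c + 1)).1 x := by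
  rcases hx.1.eq_or_lt with rfl | hx0
  · rw [(h.isConeBand c (by omega)).snd_zero hr, (h.isConeBand (c + 1) hc).fst_zero hr]
  · exact (h.lt c (c + 1) c.lt_succ_self hc x ⟨hx0, hx.2⟩).le

lemma disjoint_Icc (h : IsSortedBands r u m e) {c' : ℕ} (hc : c < m) (hc' : c' < m)
    (hne : c ≠ c') (hx : x ∈ Ioo 0 r) :
    Disjoint (Icc ((e c).1 x) ((e c).2 x)) (Icc ((e c').1 x) ((e c').2 x)) := by
  rw [disjoint_Icc_iff ((h.isConeBand c hc).le x (Ioo_subset_Ico_self hx))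
    ((h.isConeBand c' hc').le x (Ioo_subset_Ico_self hx))]
  rcases hne.lt_or_gt with hlt | hlt
  · exact Or.inl (h.lt c c' hlt hc' x hx)
  · exact Or.inr (h.lt c' c hlt hc x hx)

end IsSortedBands

/-! ### The frontier of a stack of bands -/

structure IsBandStack (F : Set ℝ²) (r u : ℝ) (m : ℕ) (e : ℕ → EdgePair) : Prop
    extends IsSortedBands r u m e where
  inter_coneSet : F ∩ coneSet r (2 * u) = ⋃ c ∈ Finset.range m, band (e c) r

namespace IsBandStack

variable {F : Set ℝ²} {r u : ℝ} {m : ℕ} {e : ℕ → EdgePair} {c : ℕ} {x : ℝ} {f : ℝ → ℝ}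

lemma band_subset (h : IsBandStack F r u m e) (hc : c < m) : band (e c) r ⊆ F :=
  (subset_biUnion_of_mem (u := fun c => band (e c) r) (Finset.mem_range.2 hc)).trans
    (h.inter_coneSet ▸ inter_subset_left)

lemma mem_interior (h : IsBandStack F r u m e) (hc : c < m) {p : ℝ²} (hp : p 0 ∈ Ioo 0 r)
    (hy : p 1 ∈ Ioo ((e c).1 (p 0)) ((e c).2 (p 0))) : p ∈ interior F := by
  have hnhds : Ico 0 r ∈ 𝓝 (p 0) := Ico_mem_nhds hp.1 hp.2
  have h₀ : Continuous fun q : ℝ² => q 0 := by fun_prop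
  have h₁ : Continuous fun q : ℝ² => q 1 := by fun_prop
  have hfst : ContinuousAt (fun q : ℝ² => (e c).1 (q 0)) p :=
    ContinuousAt.comp (f := fun q : ℝ² => q 0)
      ((h.isConeBand c hc).continuousOn_fst.continuousAt hnhds) h₀.continuousAt
  have hsnd : ContinuousAt (fun q : ℝ² => (e c).2 (q 0)) p :=
    ContinuousAt.comp (f := fun q : ℝ² => q 0)
      ((h.isConeBand c hc).continuousOn_snd.continuousAt hnhds) h₀.continuousAt
  rw [mem_interior_iff_mem_nhds]
  filter_upwards [hfst.eventually_lt h₁.continuousAt hy.1,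
    h₁.continuousAt.eventually_lt hsnd hy.2, h₀.continuousAt.eventually_mem hnhds]
    with q hq₁ hq₂ hq₀
  exact h.band_subset hc ⟨hq₀, hq₁.le, hq₂.le⟩

/-- Points of the section over `x` that are close to `y` and outside the band `e c` are
outside all the other bands and inside the cone, hence outside `F`. -/
lemma mem_closure_compl (h : IsBandStack F r u m e) (hc : c < m) (hx : x ∈ Ioo 0 r) {y : ℝ}
    (hy : |y| < x * (2 * u)) (hyc : y ∈ Icc ((e c).1 x) ((e c).2 x))
    (hcl : y ∈ closure (Icc ((e c).1 x) ((e c).2 x))ᶜ) : !₂[x, y] ∈ closure Fᶜ := by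
  set K := ⋃ c' ∈ (Finset.range m).erase c, Icc ((e c').1 x) ((e c').2 x)
  have hK : IsClosed K := isClosed_biUnion_finset fun _ _ => isClosed_Icc
  have hyK : y ∉ K := by
    simp only [K, mem_iUnion, Finset.mem_erase, Finset.mem_range, not_exists]
    exact fun c' ⟨hne, hc'⟩ => disjoint_left.1 (h.disjoint_Icc hc hc' (Ne.symm hne) hx) hyc
  have hopen : IsOpen (Ioo (-(x * (2 * u))) (x * (2 * u)) ∩ Kᶜ) :=
    isOpen_Ioo.inter hK.isOpen_compl
  refine map_mem_closure (f := fun y' : ℝ => (!₂[x, y'] : ℝ²)) (by fun_prop)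
    (hopen.inter_closure ⟨⟨abs_lt.1 hy, hyK⟩, hcl⟩) fun y' ⟨⟨hy'cone, hy'K⟩, hy'c⟩ hy'F => ?_
  have hmem : !₂[x, y'] ∈ F ∩ coneSet r (2 * u) :=
    ⟨hy'F, by simp [coneSet, hx.1.le, hx.2, hy'cone.1.le, hy'cone.2.le]⟩
  simp only [h.inter_coneSet, mem_iUnion, Finset.mem_range, vec2_mem_band] at hmem
  obtain ⟨c', hc', -, hc'y⟩ := hmem
  rcases eq_or_ne c' c with rfl | hne
  · exact hy'c hc'y
  · exact hy'K (mem_biUnion (Finset.mem_erase.2 ⟨hne, Finset.mem_range.2 hc'⟩) hc'y)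

lemma mem_frontier (h : IsBandStack F r u m e) (hu : 0 < u) (hc : c < m)
    (hf : f = (e c).1 ∨ f = (e c).2) (hflat : IsFlatEdge f r u) (hx : x ∈ Ioo 0 r) :
    !₂[x, f x] ∈ frontier F := by
  have hle := (h.isConeBand c hc).le x (Ioo_subset_Ico_self hx)
  have hmem : f x ∈ Icc ((e c).1 x) ((e c).2 x) := by
    rcases hf with rfl | rfl
    exacts [⟨le_rfl, hle⟩, ⟨hle, le_rfl⟩]
  rw [frontier_eq_closure_inter_closure]
  refine ⟨subset_closure (h.band_subset hc (vec2_mem_band.2 ⟨Ioo_subset_Ico_self hx, hmem⟩)),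
    h.mem_closure_compl hc hx (hflat.abs_lt hu hx) hmem ?_⟩
  rcases hf with rfl | rfl
  · have hsub : Iio ((e c).1 x) ⊆ (Icc ((e c).1 x) ((e c).2 x))ᶜ :=
      fun y hy hy' => hy.not_ge hy'.1
    refine closure_mono hsub ?_
    rw [closure_Iio]
    exact mem_Iic.2 le_rfl
  · have hsub : Ioi ((e c).2 x) ⊆ (Icc ((e c).1 x) ((e c).2 x))ᶜ :=
      fun y hy hy' => hy.not_ge hy'.2
    refine closure_mono hsub ?_
    rw [closure_Ioi]
    exact mem_Ici.2 le_rfl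

lemma zero_mem_frontier (h : IsBandStack F r u m e) (hr : 0 < r) (hu : 0 < u) (hc : c < m)
    (hf : f = (e c).1 ∨ f = (e c).2) (hflat : IsFlatEdge f r u) : (0 : ℝ²) ∈ frontier F := by
  have hf0 : Tendsto f (𝓝[>] 0) (𝓝 0) := by
    simpa [hflat.map_zero hr] using
      (hflat.2.1.continuousWithinAt.mono Ioi_subset_Ici_self).tendsto
  have hlim : Tendsto (fun t => (!₂[t, f t] : ℝ²)) (𝓝[>] 0) (𝓝 0) := by
    rw [← EuclideanSpace.vec2_zero]
    exact ((by fun_prop : Continuous fun q : ℝ × ℝ => (!₂[q.1, q.2] : ℝ²)).tendsto (0, 0)).comp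
      (tendsto_nhdsWithin_of_tendsto_nhds tendsto_id |>.prodMk_nhds hf0)
  refine isClosed_frontier.mem_of_tendsto hlim ?_
  filter_upwards [Ioo_mem_nhdsGT hr] with t ht using h.mem_frontier hu hc hf hflat ht

lemma exists_isFlatEdge_of_mem_frontier (h : IsBandStack F r u m e) (hFc : IsClosed F)
    (hu : 0 < u) {p : ℝ²} (hp : p ∈ frontier F) (hpc : p ∈ coneSet r u) (hp0 : 0 < p 0) :
    ∃ c < m, ∃ f : ℝ → ℝ, (f = (e c).1 ∨ f = (e c).2) ∧ IsFlatEdge f r u ∧ p 1 = f (p 0) := by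
  rw [hFc.frontier_eq] at hp
  have hpF : p ∈ F ∩ coneSet r (2 * u) := ⟨hp.1, coneSet_mono le_rfl (by linarith) hpc⟩
  simp only [h.inter_coneSet, mem_iUnion, Finset.mem_range] at hpF
  obtain ⟨c, hc, hpx, hpy⟩ := hpF
  have hβ := h.isConeBand c hc
  obtain ⟨-, -, hlow, hup⟩ := hpc
  refine ⟨c, hc, ?_⟩
  rcases hpy.1.eq_or_lt with h₁ | h₁
  · exact ⟨_, Or.inl rfl, hβ.isFlatEdge_fst hpx (by nlinarith), h₁.symm⟩
  rcases hpy.2.eq_or_lt with h₂ | h₂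
  · exact ⟨_, Or.inr rfl, hβ.isFlatEdge_snd hpx (by nlinarith), h₂⟩
  exact (hp.2 (h.mem_interior hc ⟨hp0, hpx.2⟩ ⟨h₁, h₂⟩)).elim

end IsBandStack

/-! ### The flat edges of a stack, from bottom to top -/

namespace EdgePair

variable {r u x : ℝ} {β : EdgePair}

open Classical in
noncomputable def lowerFlat (r u : ℝ) (β : EdgePair) : ℝ → ℝ :=
  if IsFlatEdge β.1 r u then β.1 else β.2

open Classical in
noncomputable def upperFlat (r u : ℝ) (β : EdgePair) : ℝ → ℝ :=
  if IsFlatEdge β.2 r u then β.2 else β.1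

lemma lowerFlat_eq_or : β.lowerFlat r u = β.1 ∨ β.lowerFlat r u = β.2 := by
  unfold lowerFlat; split_ifs <;> simp

lemma upperFlat_eq_or : β.upperFlat r u = β.1 ∨ β.upperFlat r u = β.2 := by
  unfold upperFlat; split_ifs <;> simp

lemma isFlatEdge_lowerFlat (hflat : IsFlatEdge β.1 r u ∨ IsFlatEdge β.2 r u) :
    IsFlatEdge (β.lowerFlat r u) r u := by
  unfold lowerFlat; split_ifs with h
  exacts [h, hflat.resolve_left h]

lemma isFlatEdge_upperFlat (hflat : IsFlatEdge β.1 r u ∨ IsFlatEdge β.2 r u) :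
    IsFlatEdge (β.upperFlat r u) r u := by
  unfold upperFlat; split_ifs with h
  exacts [h, hflat.resolve_right h]

lemma lowerFlat_mem_Icc (hβ : IsConeBand r u β) (hx : x ∈ Ico 0 r) :
    β.lowerFlat r u x ∈ Icc (β.1 x) (β.2 x) := by
  rcases β.lowerFlat_eq_or (r := r) (u := u) with h | h <;> simp [h, hβ.le x hx]

lemma upperFlat_mem_Icc (hβ : IsConeBand r u β) (hx : x ∈ Ico 0 r) :
    β.upperFlat r u x ∈ Icc (β.1 x) (β.2 x) := by
  rcases β.upperFlat_eq_or (r := r) (u := u) with h | h <;> simp [h, hβ.le x hx]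

lemma lowerFlat_le_upperFlat (hβ : IsConeBand r u β)
    (hflat : IsFlatEdge β.1 r u ∨ IsFlatEdge β.2 r u) (hx : x ∈ Ico 0 r) :
    β.lowerFlat r u x ≤ β.upperFlat r u x := by
  unfold lowerFlat upperFlat
  split_ifs with h₁ h₂ h₂
  exacts [hβ.le x hx, le_rfl, le_rfl, (hflat.elim h₁ h₂).elim]

end EdgePair

/-- Band `c` fills the slots `2 * c` and `2 * c + 1`; when one of its edges is a rim, its other
edge fills both. -/
noncomputable def flatEdgeSeq (r u : ℝ) (e : ℕ → EdgePair) (i : ℕ) : ℝ → ℝ :=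
  if Even i then (e (i / 2)).lowerFlat r u else (e (i / 2)).upperFlat r u

lemma flatEdgeSeq_two_mul (r u : ℝ) (e : ℕ → EdgePair) (c : ℕ) :
    flatEdgeSeq r u e (2 * c) = (e c).lowerFlat r u := by
  simp [flatEdgeSeq]

lemma flatEdgeSeq_two_mul_add_one (r u : ℝ) (e : ℕ → EdgePair) (c : ℕ) :
    flatEdgeSeq r u e (2 * c + 1) = (e c).upperFlat r u := by
  simp [flatEdgeSeq, Nat.add_div_of_dvd_right (dvd_mul_right 2 c)]

lemma flatEdgeSeq_spec {r u : ℝ} {m i : ℕ} {e : ℕ → EdgePair}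
    (hflat : ∀ c < m, IsFlatEdge (e c).1 r u ∨ IsFlatEdge (e c).2 r u) (hi : i < 2 * m) :
    ∃ c < m, (flatEdgeSeq r u e i = (e c).1 ∨ flatEdgeSeq r u e i = (e c).2) ∧
      IsFlatEdge (flatEdgeSeq r u e i) r u := by
  obtain ⟨c, rfl | rfl⟩ := Nat.even_or_odd' i
  · rw [flatEdgeSeq_two_mul]
    exact ⟨c, by omega, EdgePair.lowerFlat_eq_or,
      EdgePair.isFlatEdge_lowerFlat (hflat c (by omega))⟩
  · rw [flatEdgeSeq_two_mul_add_one]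
    exact ⟨c, by omega, EdgePair.upperFlat_eq_or,
      EdgePair.isFlatEdge_upperFlat (hflat c (by omega))⟩

namespace IsSortedBands

variable {r u : ℝ} {m : ℕ} {e : ℕ → EdgePair} {i : ℕ} {x : ℝ}

lemma flatEdgeSeq_le_succ (h : IsSortedBands r u m e) (hr : 0 < r)
    (hflat : ∀ c < m, IsFlatEdge (e c).1 r u ∨ IsFlatEdge (e c).2 r u) (hi : i + 1 < 2 * m)
    (hx : x ∈ Ico 0 r) : flatEdgeSeq r u e i x ≤ flatEdgeSeq r u e (i + 1) x := by
  obtain ⟨c, rfl | rfl⟩ := Nat.even_or_odd' i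
  · rw [flatEdgeSeq_two_mul, flatEdgeSeq_two_mul_add_one]
    exact (e c).lowerFlat_le_upperFlat (h.isConeBand c (by omega)) (hflat c (by omega)) hx
  · rw [flatEdgeSeq_two_mul_add_one, show 2 * c + 1 + 1 = 2 * (c + 1) by ring,
      flatEdgeSeq_two_mul]
    calc (e c).upperFlat r u x
        ≤ (e c).2 x := ((e c).upperFlat_mem_Icc (h.isConeBand c (by omega)) hx).2
      _ ≤ (e (c + 1)).1 x := h.snd_le_fst hr (by omega) hx
      _ ≤ (e (c + 1)).lowerFlat r u x :=
        ((e (c + 1)).lowerFlat_mem_Icc (h.isConeBand (c + 1) (by omega)) hx).1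

lemma flatEdgeSeq_odd_lt_succ (h : IsSortedBands r u m e) {c : ℕ} (hc : 2 * c + 1 + 1 < 2 * m)
    (hx : x ∈ Ioo 0 r) :
    flatEdgeSeq r u e (2 * c + 1) x < flatEdgeSeq r u e (2 * c + 1 + 1) x := by
  rw [flatEdgeSeq_two_mul_add_one, show 2 * c + 1 + 1 = 2 * (c + 1) by ring, flatEdgeSeq_two_mul]
  have hx' := Ioo_subset_Ico_self hx
  calc (e c).upperFlat r u x
      ≤ (e c).2 x := ((e c).upperFlat_mem_Icc (h.isConeBand c (by omega)) hx').2
    _ < (e (c + 1)).1 x := h.lt c (c + 1) c.lt_succ_self (by omega) x hx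
    _ ≤ (e (c + 1)).lowerFlat r u x :=
      ((e (c + 1)).lowerFlat_mem_Icc (h.isConeBand (c + 1) (by omega)) hx').1

end IsSortedBands

namespace IsBandStack

variable {F : Set ℝ²} {r u : ℝ} {m : ℕ} {e : ℕ → EdgePair} {i : ℕ}

lemma graphOn_flatEdgeSeq_subset_frontier (h : IsBandStack F r u m e) (hr : 0 < r) (hu : 0 < u)
    (hflat : ∀ c < m, IsFlatEdge (e c).1 r u ∨ IsFlatEdge (e c).2 r u) (hi : i < 2 * m) :
    graphOn (flatEdgeSeq r u e i) r ⊆ frontier F := by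
  obtain ⟨c, hc, hedge, hflat'⟩ := flatEdgeSeq_spec hflat hi
  rintro _ ⟨x, hx, rfl⟩
  rcases hx.1.eq_or_lt with rfl | hx0
  · dsimp only
    rw [hflat'.map_zero hr, EuclideanSpace.vec2_zero]
    exact h.zero_mem_frontier hr hu hc hedge hflat'
  · exact h.mem_frontier hu hc hedge hflat' ⟨hx0, hx.2⟩

lemma exists_mem_graphOn_flatEdgeSeq (h : IsBandStack F r u m e) (hFc : IsClosed F)
    (hr : 0 < r) (hu : 0 < u) (hm : 0 < m)
    (hflat : ∀ c < m, IsFlatEdge (e c).1 r u ∨ IsFlatEdge (e c).2 r u) {p : ℝ²}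
    (hp : p ∈ frontier F) (hpc : p ∈ coneSet r u) :
    ∃ i < 2 * m, p ∈ graphOn (flatEdgeSeq r u e i) r := by
  have hpx : p 0 ∈ Ico 0 r := ⟨hpc.1, hpc.2.1⟩
  rcases hpc.1.eq_or_lt with hp0 | hp0
  · refine ⟨0, by omega, mem_graphOn_iff.2 ⟨hpx, ?_⟩⟩
    obtain ⟨-, -, -, hflat₀⟩ := flatEdgeSeq_spec hflat (i := 0) (by omega)
    rw [← hp0, hflat₀.map_zero hr, eq_zero_of_mem_coneSet hpc hp0.symm]
    rfl
  obtain ⟨c, hc, f, hf, hflatf, hpf⟩ := h.exists_isFlatEdge_of_mem_frontier hFc hu hp hpc hp0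
  rcases hf with rfl | rfl
  · refine ⟨2 * c, by omega, mem_graphOn_iff.2 ⟨hpx, ?_⟩⟩
    rwa [flatEdgeSeq_two_mul, EdgePair.lowerFlat, if_pos hflatf]
  · refine ⟨2 * c + 1, by omega, mem_graphOn_iff.2 ⟨hpx, ?_⟩⟩
    rwa [flatEdgeSeq_two_mul_add_one, EdgePair.upperFlat, if_pos hflatf]

theorem isTT3Set (h : IsBandStack F r u m e) (hFc : IsClosed F) (hr : 0 < r) (hu : 0 < u)
    (hm : 0 < m) (hflat : ∀ c < m, IsFlatEdge (e c).1 r u ∨ IsFlatEdge (e c).2 r u) :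
    IsTT3Set F r (u / 2) := by
  have hgraph := fun p (hp : p ∈ frontier F) (hpc : p ∈ coneSet r u) =>
    h.exists_mem_graphOn_flatEdgeSeq hFc hr hu hm hflat hp hpc
  rw [IsTT3Set, show 2 * (u / 2) = u by ring]
  refine ⟨fun p ⟨hp, hpc⟩ => ?_, 2 * m, flatEdgeSeq r u e, fun i hi => ?_,
    fun i hi x hx => h.flatEdgeSeq_le_succ hr hflat hi hx, Subset.antisymm ?_ ?_, ?_⟩
  · obtain ⟨i, hi, hpi⟩ := hgraph p hp hpc
    obtain ⟨-, -, -, hflat'⟩ := flatEdgeSeq_spec hflat hi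
    exact hflat'.graphOn_subset_coneSet hpi
  · obtain ⟨-, -, -, hdcr, hderiv, -⟩ := flatEdgeSeq_spec hflat hi
    exact ⟨hdcr, hderiv⟩
  · rintro p ⟨hp, hpc⟩
    obtain ⟨i, hi, hpi⟩ := hgraph p hp (coneSet_mono le_rfl (by linarith) hpc)
    exact mem_biUnion (Finset.mem_range.2 hi) hpi
  · refine iUnion₂_subset fun i hi => ?_
    obtain ⟨-, -, -, hflat'⟩ := flatEdgeSeq_spec hflat (Finset.mem_range.1 hi)
    exact subset_inter (h.graphOn_flatEdgeSeq_subset_frontier hr hu hflat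
      (Finset.mem_range.1 hi)) hflat'.graphOn_subset_coneSet
  · intro i hi ⟨x, hx, hxeq⟩
    obtain ⟨c, rfl | rfl⟩ := Nat.even_or_odd' i
    · rintro p ⟨hp, hp₁, hp₂⟩
      rw [flatEdgeSeq_two_mul] at hp₁
      rw [flatEdgeSeq_two_mul_add_one] at hp₂
      have hβ := h.isConeBand c (by omega)
      exact h.band_subset (by omega) ⟨hp, ((e c).lowerFlat_mem_Icc hβ hp).1.trans hp₁,
        hp₂.trans ((e c).upperFlat_mem_Icc hβ hp).2⟩
    · exact ((h.flatEdgeSeq_odd_lt_succ hi hx).ne hxeq).elim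

end IsBandStack

theorem exists_isT1Set_or_isT2Set_or_isTT3Set {F : Set ℝ²} (hFc : IsClosed F) {r u : ℝ}
    (hr : 0 < r) (hu : 0 < u) (s : Finset EdgePair) (hs : ∀ β ∈ s, IsConeBand r u β)
    (hpair : (s : Set EdgePair).Pairwise fun β γ => Overlaps r β γ ∨ Separated r β γ)
    (hF : F ∩ coneSet r (2 * u) = {0} ∪ ⋃ β ∈ s, band β r) :
    ∃ r u, 0 < r ∧ 0 < u ∧ (IsT1Set F r u ∨ IsT2Set F r u ∨ IsTT3Set F r u) := by
  by_cases hT2 : IsT2Set F r u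
  · exact ⟨r, u, hr, hu, Or.inr (Or.inl hT2)⟩
  obtain ⟨t, ht, htsep, htun⟩ := exists_separated_bands s hs hpair
  obtain ⟨m, e, he, heun⟩ := exists_isSortedBands hr t ht htsep
  rw [← htun, heun] at hF
  rcases Nat.eq_zero_or_pos m with rfl | hm
  · exact ⟨r, u, hr, hu, Or.inl (by simpa using hF : F ∩ coneSet r (2 * u) = {0})⟩
  have hstack : IsBandStack F r u m e := ⟨he, by
    rw [hF, union_eq_right, singleton_subset_iff]
    exact mem_biUnion (Finset.mem_range.2 hm) ((he.isConeBand 0 hm).zero_mem_band hr)⟩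
  have hflat : ∀ c < m, IsFlatEdge (e c).1 r u ∨ IsFlatEdge (e c).2 r u := fun c hc => by
    by_contra! ⟨h₁, h₂⟩
    exact hT2 (((he.isConeBand c hc).coneSet_subset_band h₁ h₂).trans (hstack.band_subset hc))
  exact ⟨r, u / 2, hr, half_pos hu, Or.inr (Or.inr (hstack.isTT3Set hFc hr hu hm hflat))⟩

theorem type_of_union_from_types_of_intersections_general
    (M : Set (EuclideanSpace ℝ (Fin 2))) (hMcl : IsClosed M)
    (x v : EuclideanSpace ℝ (Fin 2)) (hx : x ∈ M)
    (N : ℕ) (Mj : Fin N → Set (EuclideanSpace ℝ (Fin 2)))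
    (hun : M = ⋃ j, Mj j)
    (hI : ∀ I : Finset (Fin N), I.Nonempty →
      x ∈ ⋂ j ∈ I, Mj j ∧
      (OfTypeT1 (⋂ j ∈ I, Mj j) x v ∨ OfTypeT2 (⋂ j ∈ I, Mj j) x v ∨
        OfTypeT3 (⋂ j ∈ I, Mj j) x v ∨ OfTypeT4 (⋂ j ∈ I, Mj j) x v ∨
        OfTypeT5 (⋂ j ∈ I, Mj j) x v)) :
    OfTypeTT1 M x v ∨ OfTypeTT2 M x v ∨ OfTypeTT3 M x v := by
  have hev : ∀ I : Finset (Fin N), ∀ᶠ u in 𝓝[>] 0, ∀ᶠ r in 𝓝[>] 0,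
      I.Nonempty → IsPointOrBand (⋂ j ∈ I, gammaMap x v ⁻¹' Mj j) r u := fun I => by
    by_cases hne : I.Nonempty
    · simpa [hne, preimage_iInter₂] using eventually_isPointOrBand (hI I hne).2
    · simp [hne]
  obtain ⟨r, u, hr, hu, hdesc⟩ := exists_forall_of_eventually_nhdsGT hev
  have h0 : (0 : ℝ²) ∈ ⋃ j, gammaMap x v ⁻¹' Mj j := by
    rw [← preimage_iUnion, ← hun, mem_preimage, gammaMap_zero]
    exact hx
  obtain ⟨s, hs, hpair, hF⟩ := exists_bands_of_pieces hr h0 hdesc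
  rw [← preimage_iUnion, ← hun] at hF
  obtain ⟨r', u', hr', hu', h | h | h⟩ := exists_isT1Set_or_isT2Set_or_isTT3Set
    (hMcl.preimage (continuous_gammaMap x v)) hr hu s hs hpair hF
  exacts [Or.inl ⟨r', u', hr', hu', h⟩, Or.inr (Or.inl ⟨r', u', hr', hu', h⟩),
    Or.inr (Or.inr ⟨r', u', hr', hu', h⟩)]

/-- Let `M ⊆ ℝ²` be closed, `x ∈ M`, `v` a unit vector, and suppose
`M = M₁ ∪ ⋯ ∪ M_N` with each `M j` closed and such that for every nonempty
`I ⊆ {1,…,N}` the set `M_I = ⋂_{j ∈ I} M j` contains `x` and is of type `T^i` at `x` in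
direction `v` for some `i ∈ {1,…,5}`.  Then `M` is of type `𝒯^i` at `x` in direction `v`
for some `i ∈ {1,2,3}`. -/
theorem type_of_union_from_types_of_intersections
    (M : Set (EuclideanSpace ℝ (Fin 2))) (hMcl : IsClosed M)
    (x v : EuclideanSpace ℝ (Fin 2)) (hx : x ∈ M) (hv : ‖v‖ = 1)
    (N : ℕ) (Mj : Fin N → Set (EuclideanSpace ℝ (Fin 2)))
    (hcl : ∀ j, IsClosed (Mj j)) (hun : M = ⋃ j, Mj j)
    (hI : ∀ I : Finset (Fin N), I.Nonempty →
      x ∈ ⋂ j ∈ I, Mj j ∧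
      (OfTypeT1 (⋂ j ∈ I, Mj j) x v ∨ OfTypeT2 (⋂ j ∈ I, Mj j) x v ∨
        OfTypeT3 (⋂ j ∈ I, Mj j) x v ∨ OfTypeT4 (⋂ j ∈ I, Mj j) x v ∨
        OfTypeT5 (⋂ j ∈ I, Mj j) x v)) :
    OfTypeTT1 M x v ∨ OfTypeTT2 M x v ∨ OfTypeTT3 M x v :=
  type_of_union_from_types_of_intersections_general M hMcl x v hx N Mj hun hI
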